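/- arXiv:1906.06643 — 7 statements merged into one kernel-verified Lean document; each statement's English description precedes it below -/
import Mathlib

section
/- Let c > 1 and let ψ* be the unique ψ ∈ (0,1) with c·(1 + ln ψ) = ψ. Define g(ψ) = (c − ψ)/(−ψ·ln ψ) for ψ ∈ (0,1). Then g is strictly decreasing on (0, ψ*], strictly increasing on [ψ*, 1), and in particular g(ψ*) < g(ψ) for every ψ ∈ (0,1) with ψ ≠ ψ*. -/
/-! The derivative of `g` is `(c (1 + ln ψ) − ψ) / (ψ ln ψ)²`. Its numerator is strictly increasing
on `(0, c] ⊇ (0, 1)`, because its derivative is `c/ψ − 1`, and it vanishes at `ψ*`; so `g'` changes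
sign from negative to positive at `ψ*`. -/

open Real Set

theorem strictAntiOn_strictMonoOn_of_hasDerivAt_sign_change {f f' : ℝ → ℝ} {a b m : ℝ}
    (hm : m ∈ Ioo a b) (hf : ∀ x ∈ Ioo a b, HasDerivAt f (f' x) x)
    (hneg : ∀ x ∈ Ioo a m, f' x < 0) (hpos : ∀ x ∈ Ioo m b, 0 < f' x) :
    StrictAntiOn f (Ioc a m) ∧ StrictMonoOn f (Ico m b) ∧ ∀ x ∈ Ioo a b, x ≠ m → f m < f x := by
  have hcont : ContinuousOn f (Ioo a b) := fun x hx => (hf x hx).continuousAt.continuousWithinAt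
  have hanti : StrictAntiOn f (Ioc a m) := by
    refine strictAntiOn_of_deriv_neg (convex_Ioc a m)
      (hcont.mono (Ioc_subset_Ioo_right hm.2)) fun x hx => ?_
    rw [interior_Ioc] at hx
    rw [(hf x ⟨hx.1, hx.2.trans hm.2⟩).deriv]
    exact hneg x hx
  have hmono : StrictMonoOn f (Ico m b) := by
    refine strictMonoOn_of_deriv_pos (convex_Ico m b)
      (hcont.mono (Ico_subset_Ioo_left hm.1)) fun x hx => ?_
    rw [interior_Ico] at hx
    rw [(hf x ⟨hm.1.trans hx.1, hx.2⟩).deriv]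
    exact hpos x hx
  refine ⟨hanti, hmono, fun x hx hne => ?_⟩
  rcases hne.lt_or_gt with h | h
  · exact hanti ⟨hx.1, h.le⟩ ⟨hm.1, le_rfl⟩ h
  · exact hmono ⟨le_rfl, hm.2⟩ ⟨h.le, hx.2⟩ h

theorem hasDerivAt_sub_div_neg_mul_log (c : ℝ) {x : ℝ} (hx : x * log x ≠ 0) :
    HasDerivAt (fun ψ : ℝ => (c - ψ) / (-(ψ * log ψ)))
      ((c * (1 + log x) - x) / (x * log x) ^ 2) x := by
  have hx0 : x ≠ 0 := left_ne_zero_of_mul hx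
  have hnum : HasDerivAt (fun ψ : ℝ => c - ψ) (-1) x := by
    simpa using (hasDerivAt_id x).const_sub c
  have hden : HasDerivAt (fun ψ : ℝ => -(ψ * log ψ)) (-(log x + 1)) x := by
    refine ((hasDerivAt_id' x).mul (hasDerivAt_log hx0)).neg.congr_deriv ?_
    rw [one_mul, mul_inv_cancel₀ hx0]
  refine (hnum.div hden (neg_ne_zero.mpr hx)).congr_deriv ?_
  rw [neg_sq]
  ring

theorem strictMonoOn_mul_one_add_log_sub (c : ℝ) :
    StrictMonoOn (fun x : ℝ => c * (1 + log x) - x) (Ioc 0 c) := by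
  refine strictMonoOn_of_deriv_pos (convex_Ioc 0 c) ?_ fun x hx => ?_
  · exact ((continuousOn_log.mono fun x hx => hx.1.ne').const_add 1 |>.const_smul c).sub
      continuousOn_id
  · rw [interior_Ioc] at hx
    have hd : HasDerivAt (fun x : ℝ => c * (1 + log x) - x) (c * x⁻¹ - 1) x :=
      (((hasDerivAt_log hx.1.ne').const_add 1).const_mul c).sub (hasDerivAt_id' x)
    rw [hd.deriv, sub_pos, ← div_eq_mul_inv, one_lt_div hx.1]
    exact hx.2

/-- For `c > 1` and `ψ*` the unique root in `(0,1)` of `c·(1 + ln ψ) = ψ`, the function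
`g(ψ) = (c − ψ)/(−ψ·ln ψ)` is strictly decreasing on `(0, ψ*]`, strictly increasing on
`[ψ*, 1)`, and `g(ψ*) < g(ψ)` for every `ψ ∈ (0,1)` with `ψ ≠ ψ*`. -/
theorem csma_g_min (c : ℝ) (hc : 1 < c) (ψstar : ℝ)
    (hψstar : ψstar ∈ Set.Ioo (0 : ℝ) 1) (hroot : c * (1 + Real.log ψstar) = ψstar) :
    StrictAntiOn (fun ψ : ℝ => (c - ψ) / (-(ψ * Real.log ψ))) (Set.Ioc 0 ψstar) ∧
    StrictMonoOn (fun ψ : ℝ => (c - ψ) / (-(ψ * Real.log ψ))) (Set.Ico ψstar 1) ∧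
    ∀ ψ ∈ Set.Ioo (0 : ℝ) 1, ψ ≠ ψstar →
      (c - ψstar) / (-(ψstar * Real.log ψstar)) < (c - ψ) / (-(ψ * Real.log ψ)) := by
  obtain ⟨hs0, hs1⟩ := hψstar
  have hmono : StrictMonoOn (fun x : ℝ => c * (1 + log x) - x) (Ioo 0 1) :=
    (strictMonoOn_mul_one_add_log_sub c).mono fun x hx => ⟨hx.1, hx.2.le.trans hc.le⟩
  have hsq : ∀ x ∈ Ioo (0 : ℝ) 1, 0 < (x * log x) ^ 2 := fun x hx =>
    pow_two_pos_of_ne_zero (mul_log_neg hx.1 hx.2).ne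
  refine strictAntiOn_strictMonoOn_of_hasDerivAt_sign_change ⟨hs0, hs1⟩
    (fun x hx => hasDerivAt_sub_div_neg_mul_log c (mul_log_neg hx.1 hx.2).ne) ?_ ?_
  · rintro x ⟨hx0, hxs⟩
    have hx : x ∈ Ioo (0 : ℝ) 1 := ⟨hx0, hxs.trans hs1⟩
    have hlt := hmono hx ⟨hs0, hs1⟩ hxs
    exact div_neg_of_neg_of_pos (by simp only at hlt; linarith) (hsq x hx)
  · rintro x ⟨hsx, hx1⟩
    have hx : x ∈ Ioo (0 : ℝ) 1 := ⟨hs0.trans hsx, hx1⟩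
    have hlt := hmono ⟨hs0, hs1⟩ hx hsx
    exact div_pos (by simp only at hlt; linarith) (hsq x hx)
end

section
/- Fix reals a, x, μ, ρ with a > 0, x > 0, 0 < a·x < 1, μ ≥ 0, ρ > 0, and an integer n ≥ 1. Let ψ* be the unique ψ ∈ (0,1) with (1 + 1/x)·(1 + ln ψ) = ψ, and assume e^{−n} ≤ ψ*. Then the function λ^Col(ψ) = (1/(ax)) / ( e^{μ/ρ}·(1 + 1/x − ψ)/(−ψ·ln ψ) + 1/(ax) − 1 ) attains its maximum over the interval [e^{−n}, 1) uniquely at ψ = ψ*, and the maximum value equals ψ* / ( e^{μ/ρ}·a·x·(1 + 1/x) + (1 − a·x)·ψ* ). -/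
set_option maxHeartbeats 1000000
open Real

/-- Theorem 1 of the paper (collision model): the throughput
`λ^Col(ψ) = (1/(ax)) / ( e^{μ/ρ}·(1 + 1/x − ψ)/(−ψ·ln ψ) + 1/(ax) − 1 )`
attains its maximum over `[e^{−n}, 1)` uniquely at the root `ψ*` of
`(1 + 1/x)(1 + ln ψ) = ψ`, with maximum value
`ψ*/( e^{μ/ρ}·a·x·(1 + 1/x) + (1 − a·x)·ψ* )`. -/
theorem csma_collision_max_throughput
    (a x μ ρ : ℝ) (n : ℕ)
    (ha : 0 < a) (hx : 0 < x) (hax0 : 0 < a * x) (hax1 : a * x < 1)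
    (hμ : 0 ≤ μ) (hρ : 0 < ρ) (hn : 1 ≤ n)
    (ψstar : ℝ) (hψstar : ψstar ∈ Set.Ioo (0 : ℝ) 1)
    (hroot : (1 + 1 / x) * (1 + Real.log ψstar) = ψstar)
    (hlb : Real.exp (-(n : ℝ)) ≤ ψstar) :
    (∀ ψ ∈ Set.Ico (Real.exp (-(n : ℝ))) 1, ψ ≠ ψstar →
      (1 / (a * x)) /
        (Real.exp (μ / ρ) * (1 + 1 / x - ψ) / (-(ψ * Real.log ψ)) + 1 / (a * x) - 1) <
      (1 / (a * x)) /
        (Real.exp (μ / ρ) * (1 + 1 / x - ψstar) / (-(ψstar * Real.log ψstar))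
          + 1 / (a * x) - 1)) ∧
    (1 / (a * x)) /
        (Real.exp (μ / ρ) * (1 + 1 / x - ψstar) / (-(ψstar * Real.log ψstar))
          + 1 / (a * x) - 1) =
      ψstar / (Real.exp (μ / ρ) * a * x * (1 + 1 / x) + (1 - a * x) * ψstar) := by
  obtain ⟨hs0, hs1⟩ := hψstar
  set b : ℝ := 1 + 1 / x with hbdef
  have hx' : 0 < 1 / x := by positivity
  have hb : 1 < b := by simp [hbdef]; positivity
  have hb0 : 0 < b := by linarith
  set c : ℝ := Real.exp (μ / ρ) with hcdef
  have hc : 0 < c := Real.exp_pos _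
  have hlogs : Real.log ψstar < 0 := Real.log_neg hs0 hs1
  have hlog : Real.log ψstar = ψstar / b - 1 := by
    field_simp at hroot ⊢; linarith [hroot]
  have hDs : 0 < -(ψstar * Real.log ψstar) := by nlinarith
  -- value of the objective at ψstar
  have hval : c * (b - ψstar) / (-(ψstar * Real.log ψstar)) = c * b / ψstar := by
    rw [hlog]
    have h1 : -(ψstar * (ψstar / b - 1)) = ψstar * (b - ψstar) / b := by
      field_simp; ring
    rw [h1]
    rw [div_eq_div_iff (by rw [← h1, ← hlog]; exact hDs.ne') hs0.ne']
    field_simp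
  have hK : 1 < 1 / (a * x) := by
    rw [lt_div_iff₀ hax0]; linarith
  have hbs : ψstar < b := lt_trans hs1 hb
  have hD2 : 0 < c * b / ψstar + 1 / (a * x) - 1 := by
    have : 0 < c * b / ψstar := by positivity
    linarith
  constructor
  · intro ψ hψ hne
    obtain ⟨hψl, hψ1⟩ := hψ
    have hψ0 : 0 < ψ := lt_of_lt_of_le (Real.exp_pos _) hψl
    have hlogψ : Real.log ψ < 0 := Real.log_neg hψ0 hψ1
    have hD : 0 < -(ψ * Real.log ψ) := by nlinarith
    -- key inequality
    have ht : Real.log (ψstar / ψ) < ψstar / ψ - 1 :=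
      Real.log_lt_sub_one_of_pos (div_pos hs0 hψ0)
        (by
          intro h
          exact hne ((div_eq_one_iff_eq hψ0.ne').mp h).symm)
    rw [Real.log_div hs0.ne' hψ0.ne'] at ht
    have ht' : ψ * (Real.log ψstar - Real.log ψ) < ψstar - ψ := by
      have := mul_lt_mul_of_pos_left ht hψ0
      calc ψ * (Real.log ψstar - Real.log ψ) < ψ * (ψstar / ψ - 1) := this
        _ = ψstar - ψ := by field_simp
    have key : b * (-(ψ * Real.log ψ)) < ψstar * (b - ψ) := by
      have hls : b * Real.log ψstar = ψstar - b := by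
        rw [hlog]; field_simp
      nlinarith [mul_lt_mul_of_pos_left ht' hb0]
    -- compare the two denominators
    have hcmp : c * b / ψstar < c * (b - ψ) / (-(ψ * Real.log ψ)) := by
      rw [div_lt_div_iff₀ hs0 hD]
      nlinarith
    have hlt : c * b / ψstar + 1 / (a * x) - 1 <
        c * (b - ψ) / (-(ψ * Real.log ψ)) + 1 / (a * x) - 1 := by linarith
    have := div_lt_div_of_pos_left (by positivity : (0:ℝ) < 1 / (a * x)) hD2 hlt
    rw [hval]
    exact this
  · rw [hval]
    have hden : c * a * x * b + (1 - a * x) * ψstar ≠ 0 := by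
      nlinarith [mul_pos (mul_pos (mul_pos hc ha) hx) hb0, mul_pos hs0 (sub_pos.mpr hax1)]
    rw [div_eq_div_iff hD2.ne' hden]
    field_simp
    ring
end

section
/- Let μ ≥ 0, ρ > 0, an integer n ≥ 1, an integer K ≥ 0, positive reals Q(0), …, Q(K), and ψ* ∈ (0,1) be given. Set p = e^{−μ/ρ}·ψ*, define q̂₀ = (−ln ψ*/n)·( Σ_{i=0}^{K−1} p·(1−p)^i/Q(i) + (1−p)^K/Q(K) ), and set q_i = q̂₀·Q(i) for i = 0,…,K. Then S(p) = Σ_{i=0}^{K−1} p·(1−p)^i/q_i + (1−p)^K/q_K equals −n/ln ψ*, and consequently p = e^{−μ/ρ}·exp(−n/S(p)). -/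
open Finset

/-- The backoff parameters of Theorem 1 make `ψ*` the operating point of the large-`K`
fixed-point equation `p = e^{−μ/ρ}·exp(−n/S(p))` of the collision model. -/
theorem csma_collision_operating_point
    (μ ρ : ℝ) (n K : ℕ) (Q : ℕ → ℝ)
    (hμ : 0 ≤ μ) (hρ : 0 < ρ) (hn : 1 ≤ n)
    (hQ : ∀ i ≤ K, 0 < Q i)
    (ψstar : ℝ) (hψstar : ψstar ∈ Set.Ioo (0 : ℝ) 1)
    (p : ℝ) (hp : p = Real.exp (-(μ / ρ)) * ψstar)
    (q0hat : ℝ)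
    (hq0hat : q0hat = (-Real.log ψstar / n) *
      (∑ i ∈ Finset.range K, p * (1 - p) ^ i / Q i + (1 - p) ^ K / Q K))
    (q : ℕ → ℝ) (hq : ∀ i ≤ K, q i = q0hat * Q i) :
    (∑ i ∈ Finset.range K, p * (1 - p) ^ i / q i + (1 - p) ^ K / q K)
      = -(n : ℝ) / Real.log ψstar ∧
    p = Real.exp (-(μ / ρ)) *
      Real.exp (-(n : ℝ) /
        (∑ i ∈ Finset.range K, p * (1 - p) ^ i / q i + (1 - p) ^ K / q K)) := by
  obtain ⟨hψ0, hψ1⟩ := hψstar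
  have hlog : Real.log ψstar < 0 := Real.log_neg hψ0 hψ1
  have hp0 : 0 < p := by
    rw [hp]; positivity
  have hp1 : p < 1 := by
    rw [hp]
    calc Real.exp (-(μ / ρ)) * ψstar ≤ 1 * ψstar := by
          apply mul_le_mul_of_nonneg_right _ hψ0.le
          rw [Real.exp_le_one_iff]
          have : 0 ≤ μ / ρ := div_nonneg hμ hρ.le
          linarith
      _ = ψstar := one_mul _
      _ < 1 := hψ1
  set T : ℝ := ∑ i ∈ Finset.range K, p * (1 - p) ^ i / Q i + (1 - p) ^ K / Q K with hT
  have hT0 : 0 < T := by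
    apply add_pos_of_nonneg_of_pos
    · apply Finset.sum_nonneg
      intro i hi
      have := hQ i (le_of_lt (Finset.mem_range.mp hi))
      have h1p : (0:ℝ) ≤ 1 - p := by linarith
      positivity
    · have := hQ K le_rfl
      have h1p : (0:ℝ) < 1 - p := by linarith
      positivity
  have hn0 : (0:ℝ) < n := by exact_mod_cast hn
  have hq00 : 0 < q0hat := by
    rw [hq0hat]
    apply mul_pos _ hT0
    apply div_pos (by linarith) hn0
  have hsum : (∑ i ∈ Finset.range K, p * (1 - p) ^ i / q i + (1 - p) ^ K / q K)
      = T / q0hat := by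
    rw [hq K le_rfl, hT, add_div, Finset.sum_div]
    congr 1
    · apply Finset.sum_congr rfl
      intro i hi
      rw [hq i (le_of_lt (Finset.mem_range.mp hi)), div_div]
      ring
    · rw [div_div]
      ring
  have hTq : T / q0hat = -(n : ℝ) / Real.log ψstar := by
    rw [hq0hat]
    have hL : Real.log ψstar ≠ 0 := ne_of_lt hlog
    have hTne : T ≠ 0 := hT0.ne'
    have hnne : (n:ℝ) ≠ 0 := hn0.ne'
    field_simp
  have h1 : (∑ i ∈ Finset.range K, p * (1 - p) ^ i / q i + (1 - p) ^ K / q K)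
      = -(n : ℝ) / Real.log ψstar := hsum.trans hTq
  refine ⟨h1, ?_⟩
  rw [h1]
  have : -(n : ℝ) / (-(n : ℝ) / Real.log ψstar) = Real.log ψstar := by
    rw [div_div_eq_mul_div, mul_comm]
    rw [mul_div_assoc, div_self (by linarith : -(n:ℝ) ≠ 0), mul_one]
  rw [this, Real.exp_log hψ0, hp]
end

section
/- Let K ≥ 0 be an integer and q_0, …, q_K positive reals with q_K ≤ q_{K−1} ≤ … ≤ q_0. For p ∈ [0,1] define S(p) = Σ_{i=0}^{K−1} p(1−p)^i/q_i + (1−p)^K/q_K. Then S(p) = 1/q_0 + Σ_{i=1}^{K} (1/q_i − 1/q_{i−1})·(1−p)^i for every p ∈ [0,1], and S is nonincreasing on [0,1]. -/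
/-!
Since `p (1 - p)^i = (1 - p)^i - (1 - p)^(i+1)`, Abel summation rewrites `S` as
`1/q₀ + Σ_{i=1}^{K} (1/qᵢ - 1/q_{i-1}) (1 - p)^i`; monotonicity of `q` makes every coefficient
nonnegative, and each `(1 - p)^i` is nonincreasing on `[0, 1]`.
-/

open Finset

theorem sum_mul_one_sub_pow_mul_add_eq {R : Type*} [CommRing R] (c : ℕ → R) (p : R) (K : ℕ) :
    ∑ i ∈ range K, p * (1 - p) ^ i * c i + (1 - p) ^ K * c K
      = c 0 + ∑ i ∈ Icc 1 K, (c i - c (i - 1)) * (1 - p) ^ i := by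
  induction K with
  | zero => simp
  | succ K ih =>
    rw [sum_range_succ, sum_Icc_succ_top (Nat.le_add_left 1 K), Nat.add_sub_cancel]
    linear_combination ih

theorem antitoneOn_sum_mul_one_sub_pow {s : Finset ℕ} {a : ℕ → ℝ} (ha : ∀ i ∈ s, 0 ≤ a i) :
    AntitoneOn (fun p : ℝ => ∑ i ∈ s, a i * (1 - p) ^ i) (Set.Iic 1) := by
  intro x _ y hy hxy
  refine sum_le_sum fun i hi => mul_le_mul_of_nonneg_left ?_ (ha i hi)
  exact pow_le_pow_left₀ (sub_nonneg.2 hy) (by linarith) i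

/-- With nonincreasing positive backoff probabilities `q_0 ≥ … ≥ q_K`, the function
`S(p) = Σ_{i<K} p(1−p)^i/q_i + (1−p)^K/q_K` satisfies
`S(p) = 1/q_0 + Σ_{i=1}^{K} (1/q_i − 1/q_{i−1})(1−p)^i` and is nonincreasing on `[0,1]`. -/
theorem csma_S_antitone
    (K : ℕ) (q : ℕ → ℝ)
    (hqpos : ∀ i ≤ K, 0 < q i)
    (hqmono : ∀ i, 1 ≤ i → i ≤ K → q i ≤ q (i - 1)) :
    (∀ p ∈ Set.Icc (0 : ℝ) 1,
      (∑ i ∈ Finset.range K, p * (1 - p) ^ i / q i + (1 - p) ^ K / q K)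
        = 1 / q 0 + ∑ i ∈ Finset.Icc 1 K, (1 / q i - 1 / q (i - 1)) * (1 - p) ^ i) ∧
    AntitoneOn (fun p : ℝ =>
      ∑ i ∈ Finset.range K, p * (1 - p) ^ i / q i + (1 - p) ^ K / q K)
      (Set.Icc (0 : ℝ) 1) := by
  have hS (p : ℝ) : ∑ i ∈ range K, p * (1 - p) ^ i / q i + (1 - p) ^ K / q K
      = 1 / q 0 + ∑ i ∈ Icc 1 K, (1 / q i - 1 / q (i - 1)) * (1 - p) ^ i := by
    simpa only [mul_one_div] using
      sum_mul_one_sub_pow_mul_add_eq (fun i => 1 / q i) p K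
  have hcoef : ∀ i ∈ Icc 1 K, 0 ≤ 1 / q i - 1 / q (i - 1) := fun i hi => by
    obtain ⟨hi1, hiK⟩ := mem_Icc.1 hi
    exact sub_nonneg.2 (one_div_le_one_div_of_le (hqpos i hiK) (hqmono i hi1 hiK))
  refine ⟨fun p _ => hS p, ?_⟩
  exact (((antitoneOn_sum_mul_one_sub_pow hcoef).const_add (1 / q 0)).mono
    fun p hp => hp.2).congr fun p _ => (hS p).symm
end

section
/- Let K ≥ 0 be an integer and q_0, …, q_K positive reals with q_K ≤ q_{K−1} ≤ … ≤ q_0, and define S(p) = Σ_{i=0}^{K−1} p(1−p)^i/q_i + (1−p)^K/q_K for p ∈ [0,1]. Then for any reals γ ∈ (0,1] and β > 0, the equation p = γ·exp(−β/S(p)) has exactly one solution p in the interval (0,1). -/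
open Finset

/-- Abel-summation identity for the CSMA throughput function. -/
lemma csma_sum_id (q : ℕ → ℝ) (K : ℕ) (p : ℝ) :
    ∑ i ∈ Finset.range K, p * (1 - p) ^ i / q i + (1 - p) ^ K / q K
      = (q 0)⁻¹ + ∑ j ∈ Finset.range K, (1 - p) ^ (j + 1) * ((q (j + 1))⁻¹ - (q j)⁻¹) := by
  induction K with
  | zero => simp
  | succ n ih =>
    rw [Finset.sum_range_succ, Finset.sum_range_succ]
    have h : ∑ i ∈ Finset.range n, p * (1 - p) ^ i / q i
        = (q 0)⁻¹ + ∑ j ∈ Finset.range n, (1 - p) ^ (j + 1) * ((q (j + 1))⁻¹ - (q j)⁻¹)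
          - (1 - p) ^ n / q n := by linarith [ih]
    rw [h]
    ring

/-- With nonincreasing positive backoff probabilities, the fixed-point equation
`p = γ·exp(−β/S(p))` has exactly one solution in `(0,1)`, for any `γ ∈ (0,1]`, `β > 0`. -/
theorem csma_fixed_point_unique
    (K : ℕ) (q : ℕ → ℝ)
    (hqpos : ∀ i ≤ K, 0 < q i)
    (hqmono : ∀ i, 1 ≤ i → i ≤ K → q i ≤ q (i - 1))
    (γ β : ℝ) (hγ0 : 0 < γ) (hγ1 : γ ≤ 1) (hβ : 0 < β) :
    ∃! p : ℝ, p ∈ Set.Ioo (0 : ℝ) 1 ∧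
      p = γ * Real.exp (-β /
        (∑ i ∈ Finset.range K, p * (1 - p) ^ i / q i + (1 - p) ^ K / q K)) := by
  set S : ℝ → ℝ := fun p =>
    ∑ i ∈ Finset.range K, p * (1 - p) ^ i / q i + (1 - p) ^ K / q K with hSdef
  have hSeq : ∀ p : ℝ, S p
      = (q 0)⁻¹ + ∑ j ∈ Finset.range K, (1 - p) ^ (j + 1) * ((q (j + 1))⁻¹ - (q j)⁻¹) :=
    fun p => csma_sum_id q K p
  have hcmono : ∀ j, j < K → (q j)⁻¹ ≤ (q (j + 1))⁻¹ := by
    intro j hj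
    have h1 : q (j + 1) ≤ q j := by
      have := hqmono (j + 1) (Nat.le_add_left 1 j) (Nat.succ_le_of_lt hj)
      simpa using this
    exact inv_anti₀ (hqpos (j + 1) (Nat.succ_le_of_lt hj)) h1
  -- positivity of S on [0,1]
  have hSpos : ∀ p : ℝ, 0 ≤ p → p ≤ 1 → 0 < S p := by
    intro p hp0 hp1
    rw [hSeq]
    have h0 : 0 < (q 0)⁻¹ := inv_pos.mpr (hqpos 0 (Nat.zero_le K))
    have hsum : 0 ≤ ∑ j ∈ Finset.range K, (1 - p) ^ (j + 1) * ((q (j + 1))⁻¹ - (q j)⁻¹) := by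
      apply Finset.sum_nonneg
      intro j hj
      have hj' := Finset.mem_range.mp hj
      have h1 : (0 : ℝ) ≤ (1 - p) ^ (j + 1) := pow_nonneg (by linarith) _
      have h2 : (0 : ℝ) ≤ (q (j + 1))⁻¹ - (q j)⁻¹ := by linarith [hcmono j hj']
      exact mul_nonneg h1 h2
    linarith
  -- antitonicity of S on [0,1]
  have hSanti : ∀ x y : ℝ, 0 ≤ x → x ≤ y → y ≤ 1 → S y ≤ S x := by
    intro x y hx hxy hy1
    rw [hSeq, hSeq]
    have : ∑ j ∈ Finset.range K, (1 - y) ^ (j + 1) * ((q (j + 1))⁻¹ - (q j)⁻¹)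
        ≤ ∑ j ∈ Finset.range K, (1 - x) ^ (j + 1) * ((q (j + 1))⁻¹ - (q j)⁻¹) := by
      apply Finset.sum_le_sum
      intro j hj
      have hj' := Finset.mem_range.mp hj
      have h2 : (0 : ℝ) ≤ (q (j + 1))⁻¹ - (q j)⁻¹ := by linarith [hcmono j hj']
      have h1 : (1 - y) ^ (j + 1) ≤ (1 - x) ^ (j + 1) :=
        pow_le_pow_left₀ (by linarith) (by linarith) _
      exact mul_le_mul_of_nonneg_right h1 h2
    linarith
  -- continuity of S
  have hScont : Continuous S := by
    apply Continuous.add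
    · apply continuous_finset_sum
      intro i _
      exact ((continuous_id.mul ((continuous_const.sub continuous_id).pow i)).div_const _)
    · exact ((continuous_const.sub continuous_id).pow K).div_const _
  set g : ℝ → ℝ := fun p => γ * Real.exp (-β / S p) with hgdef
  -- g is antitone on [0,1]
  have hganti : ∀ x y : ℝ, 0 ≤ x → x ≤ y → y ≤ 1 → g y ≤ g x := by
    intro x y hx hxy hy1
    have hSy : 0 < S y := hSpos y (by linarith) hy1
    have hSx : 0 < S x := hSpos x hx (by linarith)
    have hle : S y ≤ S x := hSanti x y hx hxy hy1
    have hdiv : β / S x ≤ β / S y := div_le_div_of_nonneg_left hβ.le hSy hle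
    have : Real.exp (-β / S y) ≤ Real.exp (-β / S x) := by
      apply Real.exp_le_exp.mpr
      rw [neg_div, neg_div]
      linarith
    exact mul_le_mul_of_nonneg_left this hγ0.le
  -- continuity of g on [0,1]
  have hgcont : ContinuousOn g (Set.Icc (0 : ℝ) 1) := by
    apply ContinuousOn.mul continuousOn_const
    apply Real.continuous_exp.comp_continuousOn
    exact ContinuousOn.div continuousOn_const hScont.continuousOn
      (fun x hx => (hSpos x hx.1 hx.2).ne')
  -- the function F = g - id, IVT
  set F : ℝ → ℝ := fun p => g p - p with hFdef
  have hFcont : ContinuousOn F (Set.Icc (0 : ℝ) 1) :=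
    hgcont.sub continuousOn_id
  have hF0 : 0 < F 0 := by
    have : 0 < g 0 := mul_pos hγ0 (Real.exp_pos _)
    simpa [hFdef] using this
  have hF1 : F 1 < 0 := by
    have hS1 : 0 < S 1 := hSpos 1 zero_le_one le_rfl
    have hlt : Real.exp (-β / S 1) < 1 := by
      rw [Real.exp_lt_one_iff]
      have : 0 < β / S 1 := div_pos hβ hS1
      rw [neg_div]; linarith
    have hexp : 0 < Real.exp (-β / S 1) := Real.exp_pos _
    have : g 1 < 1 := by
      calc γ * Real.exp (-β / S 1) ≤ 1 * Real.exp (-β / S 1) :=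
            mul_le_mul_of_nonneg_right hγ1 hexp.le
        _ = Real.exp (-β / S 1) := one_mul _
        _ < 1 := hlt
    simp only [hFdef]; linarith
  have hivt : (0 : ℝ) ∈ F '' Set.Ioo (0 : ℝ) 1 := by
    apply intermediate_value_Ioo' (by norm_num : (0:ℝ) ≤ 1) hFcont
    exact ⟨hF1, hF0⟩
  obtain ⟨p, hpmem, hFp⟩ := hivt
  have hpfix : p = g p := by
    simp only [hFdef] at hFp; linarith
  refine ⟨p, ⟨hpmem, hpfix⟩, ?_⟩
  rintro y ⟨hymem, hyfix⟩
  have hyg : y = g y := hyfix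
  -- uniqueness via antitonicity
  rcases le_total y p with h | h
  · have h1 : g p ≤ g y := hganti y p hymem.1.le h hpmem.2.le
    rw [← hpfix, ← hyg] at h1
    linarith
  · have h1 : g y ≤ g p := hganti p y hpmem.1.le h hymem.2.le
    rw [← hpfix, ← hyg] at h1
    linarith
end

section
/- Fix an integer n ≥ 1 and reals a, x, μ, ρ with a > 0, x ≥ 0, μ ≥ 0, ρ > 0. With c_i, D, f and λ^Cap as defined in the context, for every ψ ∈ (0,1] with D(ψ) ≠ 0 the function λ^Cap is differentiable at ψ with derivative λ^Cap′(ψ) = −e^{−μ/ρ}·ψ^{−1/(1+μ)}·f(ψ) / D(ψ)². -/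
open Finset

/-- `c_i = (1 − e^{−μ/ρ}/(1+μ)^{i−1})^i`. -/
noncomputable def cCap (μ ρ : ℝ) (i : ℕ) : ℝ :=
  (1 - Real.exp (-(μ / ρ)) / (1 + μ) ^ (i - 1)) ^ i

/-- The denominator of the capture-model throughput (equation (13) of the paper). -/
noncomputable def DCap (n : ℕ) (a x μ ρ : ℝ) (ψ : ℝ) : ℝ :=
  1 + a - ψ - (1 - a * x) *
    ∑ i ∈ Finset.Icc 1 n, cCap μ ρ i * (n.choose i : ℝ) *
      (-Real.log ψ / n) ^ i * (1 + Real.log ψ / n) ^ (n - i)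

/-- The capture-model network throughput as a function of `ψ`. -/
noncomputable def lamCap (n : ℕ) (a x μ ρ : ℝ) (ψ : ℝ) : ℝ :=
  -Real.exp (-(μ / ρ)) * ψ ^ (μ / (1 + μ)) * Real.log ψ / DCap n a x μ ρ ψ

/-- The function `f` of equation (22) of the paper (capture model), with the `i = n`
summand written out explicitly. -/
noncomputable def fCap (n : ℕ) (a x μ ρ : ℝ) (ψ : ℝ) : ℝ :=
  (μ / (1 + μ) * Real.log ψ + 1) * (1 + a - ψ) + ψ * Real.log ψ -
    (1 - a * x) *
      ((∑ i ∈ Finset.Icc 1 (n - 1), cCap μ ρ i * (n.choose i : ℝ) *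
          (-Real.log ψ / n) ^ i *
          ((μ / (1 + μ) * Real.log ψ + 1) * (1 + Real.log ψ / n) ^ (n - i) -
            ((i : ℝ) + Real.log ψ) * (1 + Real.log ψ / n) ^ (n - i - 1))) +
        cCap μ ρ n * (-Real.log ψ / n) ^ n * (μ / (1 + μ) * Real.log ψ + 1 - (n : ℝ)))

/-!
With `k = μ/(1+μ)`, `lamCap` is the quotient `-e^{-μ/ρ} ψ^k log ψ / D(ψ)`, and the quotient
rule gives the numerator `-e^{-μ/ρ} ψ^{k-1} ((k L + 1) D - L ψ D')` with `L = log ψ`, since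
`(ψ^k log ψ)' = ψ^{k-1} (k L + 1)`. The summands of `D` are functions of `L` alone, and
`L · d/dL [(-L/n)^i (1+L/n)^{n-i}]` equals `(-L/n)^i (1+L/n)^{n-i-1} (i + L)` for `i < n` and
`n (-L/n)^n` for `i = n`; collecting terms turns `(k L + 1) D - L ψ D'` into `f`.
-/

open Real

noncomputable def capBasis (n i : ℕ) (L : ℝ) : ℝ :=
  (-L / n) ^ i * (1 + L / n) ^ (n - i)

noncomputable def capBasisDeriv (n i : ℕ) (L : ℝ) : ℝ :=
  -((i : ℝ) / n) * (-L / n) ^ (i - 1) * (1 + L / n) ^ (n - i) +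
    ((n - i : ℕ) / n : ℝ) * (-L / n) ^ i * (1 + L / n) ^ (n - i - 1)

theorem hasDerivAt_capBasis (n i : ℕ) (L : ℝ) :
    HasDerivAt (capBasis n i) (capBasisDeriv n i L) L := by
  have hu : HasDerivAt (fun L : ℝ => -L / n) (-1 / n) L := (hasDerivAt_neg L).div_const _
  have hv : HasDerivAt (fun L : ℝ => 1 + L / n) (1 / n) L :=
    ((hasDerivAt_id L).div_const _).const_add 1
  refine ((hu.fun_pow i).mul (hv.fun_pow (n - i))).congr_deriv ?_
  unfold capBasisDeriv
  ring

theorem mul_capBasisDeriv_of_lt {n i : ℕ} (hi : i < n) (L : ℝ) :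
    L * capBasisDeriv n i L = (-L / n) ^ i * (1 + L / n) ^ (n - i - 1) * (i + L) := by
  have hn : (n : ℝ) ≠ 0 := by exact_mod_cast (by omega : n ≠ 0)
  have hv : (1 + L / n) ^ (n - i) = (1 + L / n) ^ (n - i - 1) * (1 + L / n) := by
    rw [← pow_succ, Nat.sub_add_cancel (by omega)]
  rw [capBasisDeriv, Nat.cast_sub hi.le, hv]
  rcases i with _ | i
  · field_simp
    ring
  · rw [pow_succ (-L / n) i, Nat.add_sub_cancel]
    field_simp
    ring

theorem mul_capBasisDeriv_self {n : ℕ} (hn : n ≠ 0) (L : ℝ) :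
    L * capBasisDeriv n n L = n * (-L / n) ^ n := by
  obtain ⟨m, rfl⟩ : ∃ m, n = m + 1 := ⟨n - 1, by omega⟩
  simp only [capBasisDeriv, Nat.sub_self, Nat.cast_zero, pow_zero, Nat.add_sub_cancel, pow_succ]
  field_simp
  ring

theorem hasDerivAt_sum_capBasis_log (w : ℕ → ℝ) (s : Finset ℕ) (n : ℕ) {ψ : ℝ}
    (hψ : ψ ≠ 0) :
    HasDerivAt (fun t => ∑ i ∈ s, w i * capBasis n i (log t))
      (ψ⁻¹ * ∑ i ∈ s, w i * capBasisDeriv n i (log ψ)) ψ := by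
  rw [mul_sum]
  refine HasDerivAt.fun_sum fun i _ => ?_
  have hi := (hasDerivAt_capBasis n i (log ψ)).comp ψ (hasDerivAt_log hψ)
  exact (hi.const_mul (w i)).congr_deriv (by ring)

theorem DCap_eq_sum_capBasis (n : ℕ) (a x μ ρ ψ : ℝ) :
    DCap n a x μ ρ ψ = 1 + a - ψ - (1 - a * x) *
      ∑ i ∈ Icc 1 n, cCap μ ρ i * n.choose i * capBasis n i (log ψ) := by
  simp only [DCap, capBasis, mul_assoc]

theorem hasDerivAt_DCap (n : ℕ) (a x μ ρ : ℝ) {ψ : ℝ} (hψ : ψ ≠ 0) :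
    HasDerivAt (DCap n a x μ ρ)
      (-1 - (1 - a * x) *
        (ψ⁻¹ * ∑ i ∈ Icc 1 n, cCap μ ρ i * n.choose i * capBasisDeriv n i (log ψ))) ψ := by
  rw [show DCap n a x μ ρ = _ from funext (DCap_eq_sum_capBasis n a x μ ρ)]
  exact ((hasDerivAt_id ψ).const_sub (1 + a)).sub
    ((hasDerivAt_sum_capBasis_log _ _ n hψ).const_mul _)

theorem hasDerivAt_rpow_mul_log {x : ℝ} (hx : 0 < x) (k : ℝ) :
    HasDerivAt (fun t => t ^ k * log t) (x ^ (k - 1) * (k * log x + 1)) x := by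
  refine ((hasDerivAt_rpow_const (Or.inl hx.ne')).mul (hasDerivAt_log hx.ne')).congr_deriv ?_
  rw [rpow_sub_one hx.ne']
  field_simp

theorem fCap_eq_DCap_sub_log_mul (n : ℕ) (hn : 1 ≤ n) (a x μ ρ ψ : ℝ) :
    fCap n a x μ ρ ψ = (μ / (1 + μ) * log ψ + 1) * DCap n a x μ ρ ψ -
      log ψ * (-ψ - (1 - a * x) *
        ∑ i ∈ Icc 1 n, cCap μ ρ i * n.choose i * capBasisDeriv n i (log ψ)) := by
  obtain ⟨m, rfl⟩ : ∃ m, n = m + 1 := ⟨n - 1, by omega⟩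
  set L := log ψ
  set k := μ / (1 + μ)
  have hsum :
      (k * L + 1) * ∑ i ∈ Icc 1 (m + 1), cCap μ ρ i * (m + 1).choose i * capBasis (m + 1) i L -
      L * ∑ i ∈ Icc 1 (m + 1), cCap μ ρ i * (m + 1).choose i * capBasisDeriv (m + 1) i L =
      ∑ i ∈ Icc 1 m, cCap μ ρ i * (m + 1).choose i * (-L / (m + 1 : ℕ)) ^ i *
          ((k * L + 1) * (1 + L / (m + 1 : ℕ)) ^ (m + 1 - i) -
            (i + L) * (1 + L / (m + 1 : ℕ)) ^ (m + 1 - i - 1)) +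
        cCap μ ρ (m + 1) * (-L / (m + 1 : ℕ)) ^ (m + 1) * (k * L + 1 - (m + 1 : ℕ)) := by
    rw [mul_sum, mul_sum, ← sum_sub_distrib, sum_Icc_succ_top (by omega)]
    congr 1
    · refine sum_congr rfl fun i hi => ?_
      have hi : i < m + 1 := by simp only [mem_Icc] at hi; omega
      rw [capBasis]
      linear_combination -(cCap μ ρ i * (m + 1).choose i) * mul_capBasisDeriv_of_lt hi L
    · rw [capBasis, Nat.choose_self, Nat.sub_self, pow_zero]
      linear_combination -cCap μ ρ (m + 1) * mul_capBasisDeriv_self (n := m + 1) (by omega) L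
  rw [DCap_eq_sum_capBasis]
  unfold fCap
  simp only [Nat.add_sub_cancel]
  linear_combination (1 - a * x) * hsum

theorem csma_lamCap_hasDerivAt_general
    (n : ℕ) (hn : 1 ≤ n) (a x μ ρ : ℝ)
    (hμ : 0 ≤ μ)
    (ψ : ℝ) (hψ : ψ ∈ Set.Ioc (0 : ℝ) 1) (hD : DCap n a x μ ρ ψ ≠ 0) :
    HasDerivAt (lamCap n a x μ ρ)
      (-Real.exp (-(μ / ρ)) * ψ ^ (-(1 / (1 + μ))) * fCap n a x μ ρ ψ /
        (DCap n a x μ ρ ψ) ^ 2) ψ := by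
  have hψ0 : 0 < ψ := hψ.1
  have hexp : -(1 / (1 + μ)) = μ / (1 + μ) - 1 := by
    have : 1 + μ ≠ 0 := by positivity
    field_simp
    ring
  have hquot := ((hasDerivAt_rpow_mul_log hψ0 (μ / (1 + μ))).const_mul (-exp (-(μ / ρ)))).div
    (hasDerivAt_DCap n a x μ ρ hψ0.ne') hD
  have hlam : lamCap n a x μ ρ = (fun t => -exp (-(μ / ρ)) * (t ^ (μ / (1 + μ)) * log t)) /
      DCap n a x μ ρ := by
    ext t
    simp only [lamCap, Pi.div_apply, mul_assoc]
  rw [hlam]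
  refine hquot.congr_deriv ?_
  rw [hexp, fCap_eq_DCap_sub_log_mul n hn, rpow_sub_one hψ0.ne']
  field_simp
  ring

/-- The derivative formula (21) in the proof of Theorem 2 of the paper. -/
theorem csma_lamCap_hasDerivAt
    (n : ℕ) (hn : 1 ≤ n) (a x μ ρ : ℝ)
    (ha : 0 < a) (hx : 0 ≤ x) (hμ : 0 ≤ μ) (hρ : 0 < ρ)
    (ψ : ℝ) (hψ : ψ ∈ Set.Ioc (0 : ℝ) 1) (hD : DCap n a x μ ρ ψ ≠ 0) :
    HasDerivAt (lamCap n a x μ ρ)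
      (-Real.exp (-(μ / ρ)) * ψ ^ (-(1 / (1 + μ))) * fCap n a x μ ρ ψ /
        (DCap n a x μ ρ ψ) ^ 2) ψ :=
  csma_lamCap_hasDerivAt_general n hn a x μ ρ hμ ψ hψ hD
end

section
/- Let μ > 0, ρ > 0, an integer n ≥ 1, an integer K ≥ 0, positive reals Q(0), …, Q(K), and ψ* ∈ (0,1) be given. Set p = e^{−μ/ρ}·(ψ*)^{μ/(1+μ)}, define q̂₀ = (−ln ψ*/n)·( Σ_{i=0}^{K−1} p·(1−p)^i/Q(i) + (1−p)^K/Q(K) ), and set q_i = q̂₀·Q(i) for i = 0,…,K. If p < 1, then S(p) = Σ_{i=0}^{K−1} p·(1−p)^i/q_i + (1−p)^K/q_K equals −n/ln ψ*, and consequently p = e^{−μ/ρ}·exp( −(μ/(1+μ))·n/S(p) ). -/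
open Finset

/-- The backoff parameters of Theorem 2 make `ψ*` the operating point of the large-`K`
fixed-point equation `p = e^{−μ/ρ}·exp(−(μ/(1+μ))·n/S(p))` of the capture model. -/
theorem csma_capture_operating_point
    (μ ρ : ℝ) (n K : ℕ) (Q : ℕ → ℝ)
    (hμ : 0 < μ) (hρ : 0 < ρ) (hn : 1 ≤ n)
    (hQ : ∀ i ≤ K, 0 < Q i)
    (ψstar : ℝ) (hψstar : ψstar ∈ Set.Ioo (0 : ℝ) 1)
    (p : ℝ) (hp : p = Real.exp (-(μ / ρ)) * ψstar ^ (μ / (1 + μ)))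
    (hp1 : p < 1)
    (q0hat : ℝ)
    (hq0hat : q0hat = (-Real.log ψstar / n) *
      (∑ i ∈ Finset.range K, p * (1 - p) ^ i / Q i + (1 - p) ^ K / Q K))
    (q : ℕ → ℝ) (hq : ∀ i ≤ K, q i = q0hat * Q i) :
    (∑ i ∈ Finset.range K, p * (1 - p) ^ i / q i + (1 - p) ^ K / q K)
      = -(n : ℝ) / Real.log ψstar ∧
    p = Real.exp (-(μ / ρ)) *
      Real.exp (-(μ / (1 + μ)) * (n : ℝ) /
        (∑ i ∈ Finset.range K, p * (1 - p) ^ i / q i + (1 - p) ^ K / q K)) := by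
  obtain ⟨hψ0, hψ1⟩ := hψstar
  have hlog : Real.log ψstar < 0 := Real.log_neg hψ0 hψ1
  have hp0 : 0 < p := by
    rw [hp]
    exact mul_pos (Real.exp_pos _) (Real.rpow_pos_of_pos hψ0 _)
  have h1p : 0 < 1 - p := by linarith
  have hTpos : 0 < ∑ i ∈ Finset.range K, p * (1 - p) ^ i / Q i + (1 - p) ^ K / Q K := by
    have hlast : 0 < (1 - p) ^ K / Q K := div_pos (pow_pos h1p K) (hQ K le_rfl)
    have hsum : 0 ≤ ∑ i ∈ Finset.range K, p * (1 - p) ^ i / Q i := by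
      apply Finset.sum_nonneg
      intro i hi
      exact le_of_lt (div_pos (mul_pos hp0 (pow_pos h1p i))
        (hQ i (le_of_lt (Finset.mem_range.mp hi))))
    linarith
  have hn0 : (0:ℝ) < (n : ℝ) := by exact_mod_cast hn
  have hq0pos : 0 < q0hat := by
    rw [hq0hat]
    exact mul_pos (div_pos (by linarith) hn0) hTpos
  have hS : (∑ i ∈ Finset.range K, p * (1 - p) ^ i / q i + (1 - p) ^ K / q K)
      = (∑ i ∈ Finset.range K, p * (1 - p) ^ i / Q i + (1 - p) ^ K / Q K) / q0hat := by
    have h1 : ∀ i ∈ Finset.range K,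
        p * (1 - p) ^ i / q i = (p * (1 - p) ^ i / Q i) / q0hat := by
      intro i hi
      rw [hq i (le_of_lt (Finset.mem_range.mp hi)), div_mul_eq_div_div_swap]
    rw [Finset.sum_congr rfl h1, hq K le_rfl, div_mul_eq_div_div_swap,
      ← Finset.sum_div, ← add_div]
  have hSval : (∑ i ∈ Finset.range K, p * (1 - p) ^ i / Q i + (1 - p) ^ K / Q K) / q0hat
      = -(n : ℝ) / Real.log ψstar := by
    rw [hq0hat, mul_comm, div_mul_cancel_left₀ hTpos.ne', inv_div, div_neg, ← neg_div]
  refine ⟨by rw [hS, hSval], ?_⟩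
  rw [hS, hSval]
  have hdiv : -(μ / (1 + μ)) * (n : ℝ) / (-(n : ℝ) / Real.log ψstar)
      = μ / (1 + μ) * Real.log ψstar := by
    field_simp
  rw [hdiv, hp]
  congr 1
  rw [← Real.exp_log hψ0, ← Real.exp_mul, Real.exp_log hψ0]
  ring_nf
end
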